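/- arXiv:2501.18803 — 4 statements merged into one kernel-verified Lean document; each statement's English description precedes it below -/
import Mathlib

section
/- Suppose x : S × A → ℝ satisfies the flow constraints and x(s,a) ≥ 0 for all (s,a) ∈ S × A. Then the sum of squares of the values of x is bounded as (1 − γ)^{-2}/(|S||A|) ≤ ∑_{s∈S} ∑_{a∈A} x(s,a)² ≤ (1 − γ)^{-2}, where |S| and |A| denote the cardinalities of S and A. -/
/-! Summing the flow constraints over `j` and using that each `T s a` sums to 1
gives `(1 - γ) ∑ x = 1`, so `x` has total mass `(1 - γ)⁻¹`. The lower bound is then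
Cauchy–Schwarz over the `|S||A|` entries, the upper bound `∑ x² ≤ (∑ x)²` for `x ≥ 0`. -/

open Finset

section

variable {S A : Type*} [Fintype S] [Fintype A]

theorem sq_sum_sum_div_card_le_sum_sum_sq (x : S → A → ℝ) :
    (∑ s, ∑ a, x s a) ^ 2 / ((Fintype.card S : ℝ) * (Fintype.card A : ℝ))
      ≤ ∑ s, ∑ a, x s a ^ 2 := by
  have hcs := sq_sum_le_card_mul_sum_sq (s := (univ : Finset (S × A))) (f := fun p => x p.1 p.2)
  simp only [Fintype.sum_prod_type, card_univ, Fintype.card_prod, Nat.cast_mul] at hcs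
  exact div_le_of_le_mul₀ (by positivity) (by positivity) (by linarith)

theorem sum_sum_sq_le_sq_sum_sum_of_nonneg {x : S → A → ℝ} (hx : ∀ s a, 0 ≤ x s a) :
    ∑ s, ∑ a, x s a ^ 2 ≤ (∑ s, ∑ a, x s a) ^ 2 := by
  simpa only [Fintype.sum_prod_type] using
    sum_sq_le_sq_sum_of_nonneg (s := (univ : Finset (S × A))) (f := fun p => x p.1 p.2)
      fun p _ => hx p.1 p.2

theorem sum_transition_mul_eq_sum {T : S → A → S → ℝ} (hT : ∀ s a, ∑ j, T s a j = 1)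
    (x : S → A → ℝ) : ∑ j, ∑ s, ∑ a, T s a j * x s a = ∑ s, ∑ a, x s a := by
  rw [sum_comm]
  refine sum_congr rfl fun s _ => ?_
  rw [sum_comm]
  exact sum_congr rfl fun a _ => by rw [← sum_mul, hT, one_mul]

theorem sum_sum_eq_inv_one_sub_of_flow {γ : ℝ} {T : S → A → S → ℝ}
    (hT : ∀ s a, ∑ j, T s a j = 1) {α : S → ℝ} (hα : ∑ j, α j = 1) {x : S → A → ℝ}
    (hflow : ∀ j, (∑ a, x j a) - γ * ∑ s, ∑ a, T s a j * x s a = α j) :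
    ∑ s, ∑ a, x s a = (1 - γ)⁻¹ := by
  have hmass : (1 - γ) * ∑ s, ∑ a, x s a = 1 := by
    have hsum := sum_congr rfl fun j (_ : j ∈ univ) => hflow j
    rw [sum_sub_distrib, ← mul_sum, sum_transition_mul_eq_sum hT, hα] at hsum
    linarith
  exact eq_inv_of_mul_eq_one_right hmass

end

theorem occupancy_measure_sum_sq_bounds_general
    {S A : Type*} [Fintype S] [Fintype A]
    (γ : ℝ)
    (T : S → A → S → ℝ)
    (hT1 : ∀ s a, ∑ j, T s a j = 1)
    (α : S → ℝ)
    (hα1 : ∑ j, α j = 1)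
    (x : S → A → ℝ)
    (hx0 : ∀ s a, 0 ≤ x s a)
    (hflow : ∀ j, (∑ a, x j a) - γ * ∑ s, ∑ a, T s a j * x s a = α j) :
    ((1 - γ)⁻¹) ^ 2 / ((Fintype.card S : ℝ) * (Fintype.card A : ℝ))
        ≤ ∑ s, ∑ a, (x s a) ^ 2 ∧
      ∑ s, ∑ a, (x s a) ^ 2 ≤ ((1 - γ)⁻¹) ^ 2 := by
  have hmass := sum_sum_eq_inv_one_sub_of_flow hT1 hα1 hflow
  rw [← hmass]
  exact ⟨sq_sum_sum_div_card_le_sum_sum_sq x, sum_sum_sq_le_sq_sum_sum_of_nonneg hx0⟩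

/-- **Proposition 1, equation (15).** If `x : S × A → ℝ` satisfies the flow constraints of
the dual LP and is nonnegative, then the sum of squares of its values is bounded below by
`(1 - γ)⁻² / (|S||A|)` and above by `(1 - γ)⁻²`. -/
theorem occupancy_measure_sum_sq_bounds
    {S A : Type*} [Fintype S] [Fintype A] [Nonempty S] [Nonempty A]
    (γ : ℝ) (hγ0 : 0 ≤ γ) (hγ1 : γ < 1)
    (T : S → A → S → ℝ)
    (hT0 : ∀ s a j, 0 ≤ T s a j)
    (hT1 : ∀ s a, ∑ j, T s a j = 1)
    (α : S → ℝ)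
    (hα0 : ∀ j, 0 ≤ α j)
    (hα1 : ∑ j, α j = 1)
    (r : S → A → ℝ)
    (x : S → A → ℝ)
    (hx0 : ∀ s a, 0 ≤ x s a)
    (hflow : ∀ j, (∑ a, x j a) - γ * ∑ s, ∑ a, T s a j * x s a = α j) :
    ((1 - γ)⁻¹) ^ 2 / ((Fintype.card S : ℝ) * (Fintype.card A : ℝ))
        ≤ ∑ s, ∑ a, (x s a) ^ 2 ∧
      ∑ s, ∑ a, (x s a) ^ 2 ≤ ((1 - γ)⁻¹) ^ 2 :=
  occupancy_measure_sum_sq_bounds_general γ T hT1 α hα1 x hx0 hflow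
end

section
/- (Diversionary deception performance bound.) Let β > 0. Suppose x* ∈ X maximizes the revenue R over X, set R* = R(x*), and assume R* > 0. Suppose x_d ∈ X maximizes over X the diversionary objective x ↦ R(x) + β ∑_{s∈S} ∑_{a∈A} (x(s,a) − x*(s,a))². Then the revenue loss satisfies (R* − R(x_d))/R* ≤ (β/R*) ( ∑_{s∈S} ∑_{a∈A} x*(s,a)² + (1 − γ)^{-2} ). -/
/-!
Testing the optimality of `x_d` against the feasible point `x*` gives
`R* ≤ R(x_d) + β ‖x_d - x*‖²`. Both points are nonnegative, so
`‖x_d - x*‖² ≤ ‖x_d‖² + ‖x*‖²`, and `‖x_d‖² ≤ (∑ x_d)² = (1 - γ)⁻²` because summing the flow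
constraints over all states shows that every feasible occupancy measure has total mass
`(1 - γ)⁻¹`.
-/

/-- `x` is in the feasible set `X` of the dual LP with the goal-reachability constraint:
it is nonnegative, satisfies the flow constraints, and its expected visitation of the
goal states is at least `vreach`. -/
def Feasible {S A : Type*} [Fintype S] [Fintype A]
    (γ : ℝ) (T : S → A → S → ℝ) (α : S → ℝ) (Sgoal : Finset S) (vreach : ℝ)
    (x : S → A → ℝ) : Prop :=
  (∀ s a, 0 ≤ x s a) ∧
  (∀ j, (∑ a, x j a) - γ * ∑ s, ∑ a, T s a j * x s a = α j) ∧
  vreach ≤ ∑ q ∈ Sgoal, ∑ s, ∑ a, T s a q * x s a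

open Finset

theorem Finset.sum_sum_sq_le_sq_sum_sum {ι κ R : Type*} [CommSemiring R] [PartialOrder R]
    [IsOrderedRing R] (s : Finset ι) (t : Finset κ) {f : ι → κ → R}
    (hf : ∀ i ∈ s, ∀ j ∈ t, 0 ≤ f i j) :
    ∑ i ∈ s, ∑ j ∈ t, f i j ^ 2 ≤ (∑ i ∈ s, ∑ j ∈ t, f i j) ^ 2 := by
  simpa only [sum_product] using
    sum_sq_le_sq_sum_of_nonneg (s := s ×ˢ t) (f := fun p => f p.1 p.2)
      fun p hp => hf p.1 (mem_product.1 hp).1 p.2 (mem_product.1 hp).2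

namespace Feasible

variable {S A : Type*} [Fintype S] [Fintype A] {γ : ℝ} {T : S → A → S → ℝ} {α : S → ℝ}
  {Sgoal : Finset S} {vreach : ℝ} {x y : S → A → ℝ}

theorem one_sub_mul_sum_eq (hT1 : ∀ s a, ∑ j, T s a j = 1)
    (hx : Feasible γ T α Sgoal vreach x) :
    (1 - γ) * ∑ s, ∑ a, x s a = ∑ j, α j := by
  have hinflow : ∑ j, ∑ s, ∑ a, T s a j * x s a = ∑ s, ∑ a, x s a := by
    rw [sum_comm]
    refine sum_congr rfl fun s _ => ?_
    rw [sum_comm]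
    simp only [← sum_mul, hT1, one_mul]
  rw [← sum_congr rfl fun j _ => hx.2.1 j, sum_sub_distrib, ← mul_sum, hinflow]
  ring

theorem sum_eq_inv_one_sub (hT1 : ∀ s a, ∑ j, T s a j = 1) (hα1 : ∑ j, α j = 1)
    (hx : Feasible γ T α Sgoal vreach x) :
    ∑ s, ∑ a, x s a = (1 - γ)⁻¹ :=
  eq_inv_of_mul_eq_one_right (hα1 ▸ hx.one_sub_mul_sum_eq hT1)

theorem sum_sq_sub_le (hT1 : ∀ s a, ∑ j, T s a j = 1) (hα1 : ∑ j, α j = 1)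
    (hx : Feasible γ T α Sgoal vreach x) (hy : Feasible γ T α Sgoal vreach y) :
    ∑ s, ∑ a, (x s a - y s a) ^ 2 ≤ (∑ s, ∑ a, y s a ^ 2) + ((1 - γ)⁻¹) ^ 2 := by
  have hcross : ∑ s, ∑ a, (x s a - y s a) ^ 2 ≤
      (∑ s, ∑ a, x s a ^ 2) + ∑ s, ∑ a, y s a ^ 2 := by
    simp only [← sum_add_distrib]
    gcongr with s _ a _
    nlinarith [hx.1 s a, hy.1 s a]
  have hx_sq : ∑ s, ∑ a, x s a ^ 2 ≤ ((1 - γ)⁻¹) ^ 2 :=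
    hx.sum_eq_inv_one_sub hT1 hα1 ▸
      sum_sum_sq_le_sq_sum_sum _ _ fun s _ a _ => hx.1 s a
  linarith

end Feasible

theorem diversionary_deception_revenue_loss_bound_general
    {S A : Type*} [Fintype S] [Fintype A]
    (γ : ℝ)
    (T : S → A → S → ℝ)
    (hT1 : ∀ s a, ∑ j, T s a j = 1)
    (α : S → ℝ)
    (hα1 : ∑ j, α j = 1)
    (r : S → A → ℝ)
    (Sgoal : Finset S) (vreach : ℝ)
    (β : ℝ) (hβ : 0 < β)
    (xstar : S → A → ℝ)
    (hxstar : Feasible γ T α Sgoal vreach xstar)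
    (Rstar : ℝ) (hRstar : Rstar = ∑ s, ∑ a, r s a * xstar s a)
    (hRstar_pos : 0 < Rstar)
    (xd : S → A → ℝ)
    (hxd : Feasible γ T α Sgoal vreach xd)
    (hxd_opt : ∀ x : S → A → ℝ, Feasible γ T α Sgoal vreach x →
      (∑ s, ∑ a, r s a * x s a) + β * ∑ s, ∑ a, (x s a - xstar s a) ^ 2 ≤
        (∑ s, ∑ a, r s a * xd s a) + β * ∑ s, ∑ a, (xd s a - xstar s a) ^ 2) :
    (Rstar - ∑ s, ∑ a, r s a * xd s a) / Rstar ≤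
      (β / Rstar) * ((∑ s, ∑ a, (xstar s a) ^ 2) + ((1 - γ)⁻¹) ^ 2) := by
  have hloss : Rstar - ∑ s, ∑ a, r s a * xd s a ≤ β * ∑ s, ∑ a, (xd s a - xstar s a) ^ 2 := by
    have := hxd_opt xstar hxstar
    simp only [sub_self, zero_pow two_ne_zero, sum_const_zero, mul_zero, add_zero] at this
    linarith
  have hdist := mul_le_mul_of_nonneg_left (hxd.sum_sq_sub_le hT1 hα1 hxstar) hβ.le
  rw [div_mul_eq_mul_div]
  exact div_le_div_of_nonneg_right (hloss.trans hdist) hRstar_pos.le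

/-- **Theorem 1 (diversionary deception performance bound).** If `x*` maximizes the revenue
over the feasible set `X`, with optimal revenue `R* > 0`, and `x_d` maximizes the
diversionary objective `R(x) + β ∑ (x - x*)²` over `X`, then the relative revenue loss of
`x_d` is at most `(β / R*) (∑ x*² + (1 - γ)⁻²)`. -/
theorem diversionary_deception_revenue_loss_bound
    {S A : Type*} [Fintype S] [Fintype A] [Nonempty S] [Nonempty A]
    (γ : ℝ) (hγ0 : 0 ≤ γ) (hγ1 : γ < 1)
    (T : S → A → S → ℝ)
    (hT0 : ∀ s a j, 0 ≤ T s a j)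
    (hT1 : ∀ s a, ∑ j, T s a j = 1)
    (α : S → ℝ)
    (hα0 : ∀ j, 0 ≤ α j)
    (hα1 : ∑ j, α j = 1)
    (r : S → A → ℝ)
    (Sgoal : Finset S) (vreach : ℝ)
    (β : ℝ) (hβ : 0 < β)
    (xstar : S → A → ℝ)
    (hxstar : Feasible γ T α Sgoal vreach xstar)
    (hxstar_opt : ∀ x : S → A → ℝ, Feasible γ T α Sgoal vreach x →
      ∑ s, ∑ a, r s a * x s a ≤ ∑ s, ∑ a, r s a * xstar s a)
    (Rstar : ℝ) (hRstar : Rstar = ∑ s, ∑ a, r s a * xstar s a)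
    (hRstar_pos : 0 < Rstar)
    (xd : S → A → ℝ)
    (hxd : Feasible γ T α Sgoal vreach xd)
    (hxd_opt : ∀ x : S → A → ℝ, Feasible γ T α Sgoal vreach x →
      (∑ s, ∑ a, r s a * x s a) + β * ∑ s, ∑ a, (x s a - xstar s a) ^ 2 ≤
        (∑ s, ∑ a, r s a * xd s a) + β * ∑ s, ∑ a, (xd s a - xstar s a) ^ 2) :
    (Rstar - ∑ s, ∑ a, r s a * xd s a) / Rstar ≤
      (β / Rstar) * ((∑ s, ∑ a, (xstar s a) ^ 2) + ((1 - γ)⁻¹) ^ 2) :=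
  diversionary_deception_revenue_loss_bound_general γ T hT1 α hα1 r Sgoal vreach β hβ xstar hxstar
    Rstar hRstar hRstar_pos xd hxd hxd_opt
end

section
/- (Targeted deception performance bound.) Let β > 0 and let x_tar : S × A → ℝ satisfy x_tar(s,a) ≥ 0 for all (s,a). Suppose x* ∈ X maximizes the revenue R over X, set R* = R(x*), and assume R* > 0. Suppose x_d ∈ X maximizes over X the targeted objective x ↦ R(x) − β ∑_{s∈S} ∑_{a∈A} (x(s,a) − x_tar(s,a))². Then the revenue loss satisfies (R* − R(x_d))/R* ≤ (β/R*) [ ∑_{s∈S} ∑_{a∈A} ( x*(s,a)² − 2 x_tar(s,a) x*(s,a) ) − (1 − γ)^{-2}/(|S||A|) + 2 (1 − γ)^{-1} max_{(s,a) ∈ S × A} x_tar(s,a) ]. -/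
open Finset

section OccupationMeasure

variable {S A : Type*} [Fintype S] [Fintype A]

theorem one_sub_mul_sum_sum_eq_one_of_flow {γ : ℝ} {T : S → A → S → ℝ}
    (hT1 : ∀ s a, ∑ j, T s a j = 1) {α : S → ℝ} (hα1 : ∑ j, α j = 1) {x : S → A → ℝ}
    (hflow : ∀ j, (∑ a, x j a) - γ * ∑ s, ∑ a, T s a j * x s a = α j) :
    (1 - γ) * ∑ s, ∑ a, x s a = 1 := by
  have hinflow : ∑ j, ∑ s, ∑ a, T s a j * x s a = ∑ s, ∑ a, x s a := by
    rw [sum_comm]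
    refine sum_congr rfl fun s _ => ?_
    rw [sum_comm]
    exact sum_congr rfl fun a _ => by rw [← sum_mul, hT1, one_mul]
  have htotal := sum_congr rfl fun j (_ : j ∈ univ) => hflow j
  rw [sum_sub_distrib, ← mul_sum, hinflow, hα1] at htotal
  linarith

theorem sq_sum_sum_le_card_mul_sum_sum_sq (x : S → A → ℝ) :
    (∑ s, ∑ a, x s a) ^ 2 ≤
      ((Fintype.card S : ℝ) * Fintype.card A) * ∑ s, ∑ a, x s a ^ 2 := by
  have h := sq_sum_le_card_mul_sum_sq (s := (univ : Finset (S × A)))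
    (f := fun p => x p.1 p.2)
  simpa only [card_univ, Fintype.card_prod, Nat.cast_mul, Fintype.sum_prod_type] using h

theorem sum_sum_mul_le_sup'_mul_sum_sum [Nonempty S] [Nonempty A] (y : S → A → ℝ)
    {x : S → A → ℝ} (hx : ∀ s a, 0 ≤ x s a) :
    ∑ s, ∑ a, y s a * x s a ≤
      univ.sup' univ_nonempty (fun p : S × A => y p.1 p.2) * ∑ s, ∑ a, x s a := by
  simp only [mul_sum]
  gcongr with s _ a _
  · exact hx s a
  · exact le_sup' (fun p : S × A => y p.1 p.2) (mem_univ (s, a))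

theorem sum_sum_sub_sq_sub_sum_sum_sub_sq (x y t : S → A → ℝ) :
    ∑ s, ∑ a, (x s a - t s a) ^ 2 - ∑ s, ∑ a, (y s a - t s a) ^ 2 =
      ∑ s, ∑ a, (x s a ^ 2 - 2 * t s a * x s a) - ∑ s, ∑ a, y s a ^ 2 +
        2 * ∑ s, ∑ a, t s a * y s a := by
  simp only [mul_sum, ← sum_sub_distrib, ← sum_add_distrib]
  exact sum_congr rfl fun s _ => sum_congr rfl fun a _ => by ring

end OccupationMeasure

theorem targeted_deception_revenue_loss_bound_general
    {S A : Type*} [Fintype S] [Fintype A] [Nonempty S] [Nonempty A]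
    (γ : ℝ)
    (T : S → A → S → ℝ)
    (hT1 : ∀ s a, ∑ j, T s a j = 1)
    (α : S → ℝ)
    (hα1 : ∑ j, α j = 1)
    (r : S → A → ℝ)
    (Sgoal : Finset S) (vreach : ℝ)
    (β : ℝ) (hβ : 0 < β)
    (xtar : S → A → ℝ)
    (xstar : S → A → ℝ)
    (hxstar : Feasible γ T α Sgoal vreach xstar)
    (Rstar : ℝ) (hRstar : Rstar = ∑ s, ∑ a, r s a * xstar s a)
    (hRstar_pos : 0 < Rstar)
    (xd : S → A → ℝ)
    (hxd : Feasible γ T α Sgoal vreach xd)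
    (hxd_opt : ∀ x : S → A → ℝ, Feasible γ T α Sgoal vreach x →
      (∑ s, ∑ a, r s a * x s a) - β * ∑ s, ∑ a, (x s a - xtar s a) ^ 2 ≤
        (∑ s, ∑ a, r s a * xd s a) - β * ∑ s, ∑ a, (xd s a - xtar s a) ^ 2) :
    (Rstar - ∑ s, ∑ a, r s a * xd s a) / Rstar ≤
      (β / Rstar) *
        ((∑ s, ∑ a, ((xstar s a) ^ 2 - 2 * xtar s a * xstar s a))
          - ((1 - γ)⁻¹) ^ 2 / ((Fintype.card S : ℝ) * (Fintype.card A : ℝ))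
          + 2 * (1 - γ)⁻¹ *
              (Finset.univ.sup' Finset.univ_nonempty (fun p : S × A => xtar p.1 p.2))) := by
  obtain ⟨hxd0, hxd_flow, -⟩ := hxd
  have hmass : ∑ s, ∑ a, xd s a = (1 - γ)⁻¹ :=
    eq_inv_of_mul_eq_one_right (one_sub_mul_sum_sum_eq_one_of_flow hT1 hα1 hxd_flow)
  have hcard : (0 : ℝ) < Fintype.card S * Fintype.card A := by positivity
  have hnorm : ((1 - γ)⁻¹) ^ 2 / ((Fintype.card S : ℝ) * Fintype.card A) ≤
      ∑ s, ∑ a, xd s a ^ 2 := by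
    rw [div_le_iff₀' hcard, ← hmass]
    exact sq_sum_sum_le_card_mul_sum_sum_sq xd
  have hcross := sum_sum_mul_le_sup'_mul_sum_sum xtar hxd0
  rw [hmass] at hcross
  have hloss : Rstar - ∑ s, ∑ a, r s a * xd s a ≤
      β * (∑ s, ∑ a, (xstar s a ^ 2 - 2 * xtar s a * xstar s a) - ∑ s, ∑ a, xd s a ^ 2 +
        2 * ∑ s, ∑ a, xtar s a * xd s a) := by
    rw [← sum_sum_sub_sq_sub_sum_sum_sub_sq, mul_sub, hRstar]
    linarith [hxd_opt xstar hxstar]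
  rw [div_mul_eq_mul_div]
  refine div_le_div_of_nonneg_right (hloss.trans (mul_le_mul_of_nonneg_left ?_ hβ.le))
    hRstar_pos.le
  linarith

/-- **Theorem 2 (targeted deception performance bound).** If `x*` maximizes the revenue
over the feasible set `X`, with optimal revenue `R* > 0`, and `x_d` maximizes the targeted
objective `R(x) - β ∑ (x - x_tar)²` over `X`, then the relative revenue loss of `x_d` is at
most `(β / R*) [∑ (x*² - 2 x_tar x*) - (1 - γ)⁻² / (|S||A|) + 2 (1 - γ)⁻¹ max x_tar]`. -/
theorem targeted_deception_revenue_loss_bound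
    {S A : Type*} [Fintype S] [Fintype A] [Nonempty S] [Nonempty A]
    (γ : ℝ) (hγ0 : 0 ≤ γ) (hγ1 : γ < 1)
    (T : S → A → S → ℝ)
    (hT0 : ∀ s a j, 0 ≤ T s a j)
    (hT1 : ∀ s a, ∑ j, T s a j = 1)
    (α : S → ℝ)
    (hα0 : ∀ j, 0 ≤ α j)
    (hα1 : ∑ j, α j = 1)
    (r : S → A → ℝ)
    (Sgoal : Finset S) (vreach : ℝ)
    (β : ℝ) (hβ : 0 < β)
    (xtar : S → A → ℝ) (hxtar0 : ∀ s a, 0 ≤ xtar s a)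
    (xstar : S → A → ℝ)
    (hxstar : Feasible γ T α Sgoal vreach xstar)
    (hxstar_opt : ∀ x : S → A → ℝ, Feasible γ T α Sgoal vreach x →
      ∑ s, ∑ a, r s a * x s a ≤ ∑ s, ∑ a, r s a * xstar s a)
    (Rstar : ℝ) (hRstar : Rstar = ∑ s, ∑ a, r s a * xstar s a)
    (hRstar_pos : 0 < Rstar)
    (xd : S → A → ℝ)
    (hxd : Feasible γ T α Sgoal vreach xd)
    (hxd_opt : ∀ x : S → A → ℝ, Feasible γ T α Sgoal vreach x →
      (∑ s, ∑ a, r s a * x s a) - β * ∑ s, ∑ a, (x s a - xtar s a) ^ 2 ≤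
        (∑ s, ∑ a, r s a * xd s a) - β * ∑ s, ∑ a, (xd s a - xtar s a) ^ 2) :
    (Rstar - ∑ s, ∑ a, r s a * xd s a) / Rstar ≤
      (β / Rstar) *
        ((∑ s, ∑ a, ((xstar s a) ^ 2 - 2 * xtar s a * xstar s a))
          - ((1 - γ)⁻¹) ^ 2 / ((Fintype.card S : ℝ) * (Fintype.card A : ℝ))
          + 2 * (1 - γ)⁻¹ *
              (Finset.univ.sup' Finset.univ_nonempty (fun p : S × A => xtar p.1 p.2))) :=
  targeted_deception_revenue_loss_bound_general γ T hT1 α hα1 r Sgoal vreach β hβ xtar xstar hxstar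
    Rstar hRstar hRstar_pos xd hxd hxd_opt
end

section
/- (Equivocal deception performance bound.) Let β > 0 and let S_goal ⊆ S and S_decoy ⊆ S be subsets of the state set. Suppose x* ∈ X maximizes the revenue R over X, set R* = R(x*), and assume R* > 0. Suppose x_d ∈ X maximizes over X the equivocal objective x ↦ R(x) − β ( ∑_{s∈S_goal} ∑_{a∈A} x(s,a) − ∑_{s∈S_decoy} ∑_{a∈A} x(s,a) )². Then the revenue loss satisfies (R* − R(x_d))/R* ≤ (β/R*) ( ∑_{s∈S_goal} ∑_{a∈A} x*(s,a) − ∑_{s∈S_decoy} ∑_{a∈A} x*(s,a) )². -/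
theorem sub_le_of_forall_sub_le_sub {ι : Type*} {X : Set ι} {R P : ι → ℝ} {x₀ x₁ : ι}
    (hx₀ : x₀ ∈ X) (hP : 0 ≤ P x₁) (hmax : ∀ x ∈ X, R x - P x ≤ R x₁ - P x₁) :
    R x₀ - R x₁ ≤ P x₀ := by
  linarith [hmax x₀ hx₀]

theorem equivocal_deception_revenue_loss_bound_general
    {S A : Type*} [Fintype S] [Fintype A]
    (γ : ℝ)
    (T : S → A → S → ℝ)
    (α : S → ℝ)
    (r : S → A → ℝ)
    (Sgoal Sdecoy : Finset S) (vreach : ℝ)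
    (β : ℝ) (hβ : 0 < β)
    (xstar : S → A → ℝ)
    (hxstar : Feasible γ T α Sgoal vreach xstar)
    (Rstar : ℝ) (hRstar : Rstar = ∑ s, ∑ a, r s a * xstar s a)
    (hRstar_pos : 0 < Rstar)
    (xd : S → A → ℝ)
    (hxd_opt : ∀ x : S → A → ℝ, Feasible γ T α Sgoal vreach x →
      (∑ s, ∑ a, r s a * x s a)
          - β * ((∑ s ∈ Sgoal, ∑ a, x s a) - ∑ s ∈ Sdecoy, ∑ a, x s a) ^ 2 ≤
        (∑ s, ∑ a, r s a * xd s a)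
          - β * ((∑ s ∈ Sgoal, ∑ a, xd s a) - ∑ s ∈ Sdecoy, ∑ a, xd s a) ^ 2) :
    (Rstar - ∑ s, ∑ a, r s a * xd s a) / Rstar ≤
      (β / Rstar) *
        ((∑ s ∈ Sgoal, ∑ a, xstar s a) - ∑ s ∈ Sdecoy, ∑ a, xstar s a) ^ 2 := by
  have hloss : Rstar - ∑ s, ∑ a, r s a * xd s a ≤
      β * ((∑ s ∈ Sgoal, ∑ a, xstar s a) - ∑ s ∈ Sdecoy, ∑ a, xstar s a) ^ 2 :=
    hRstar ▸ sub_le_of_forall_sub_le_sub (X := {x | Feasible γ T α Sgoal vreach x})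
      (R := fun x => ∑ s, ∑ a, r s a * x s a)
      (P := fun x => β * ((∑ s ∈ Sgoal, ∑ a, x s a) - ∑ s ∈ Sdecoy, ∑ a, x s a) ^ 2)
      hxstar (mul_nonneg hβ.le (sq_nonneg _)) hxd_opt
  rw [div_mul_eq_mul_div]
  exact div_le_div_of_nonneg_right hloss hRstar_pos.le

/-- **Theorem 3 (equivocal deception performance bound).** If `x*` maximizes the revenue
over the feasible set `X`, with optimal revenue `R* > 0`, and `x_d` maximizes the equivocal
objective `R(x) - β (∑_{goal} x - ∑_{decoy} x)²` over `X`, then the relative revenue loss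
of `x_d` is at most `(β / R*) (∑_{goal} x* - ∑_{decoy} x*)²`. -/
theorem equivocal_deception_revenue_loss_bound
    {S A : Type*} [Fintype S] [Fintype A] [Nonempty S] [Nonempty A]
    (γ : ℝ) (hγ0 : 0 ≤ γ) (hγ1 : γ < 1)
    (T : S → A → S → ℝ)
    (hT0 : ∀ s a j, 0 ≤ T s a j)
    (hT1 : ∀ s a, ∑ j, T s a j = 1)
    (α : S → ℝ)
    (hα0 : ∀ j, 0 ≤ α j)
    (hα1 : ∑ j, α j = 1)
    (r : S → A → ℝ)
    (Sgoal Sdecoy : Finset S) (vreach : ℝ)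
    (β : ℝ) (hβ : 0 < β)
    (xstar : S → A → ℝ)
    (hxstar : Feasible γ T α Sgoal vreach xstar)
    (hxstar_opt : ∀ x : S → A → ℝ, Feasible γ T α Sgoal vreach x →
      ∑ s, ∑ a, r s a * x s a ≤ ∑ s, ∑ a, r s a * xstar s a)
    (Rstar : ℝ) (hRstar : Rstar = ∑ s, ∑ a, r s a * xstar s a)
    (hRstar_pos : 0 < Rstar)
    (xd : S → A → ℝ)
    (hxd : Feasible γ T α Sgoal vreach xd)
    (hxd_opt : ∀ x : S → A → ℝ, Feasible γ T α Sgoal vreach x →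
      (∑ s, ∑ a, r s a * x s a)
          - β * ((∑ s ∈ Sgoal, ∑ a, x s a) - ∑ s ∈ Sdecoy, ∑ a, x s a) ^ 2 ≤
        (∑ s, ∑ a, r s a * xd s a)
          - β * ((∑ s ∈ Sgoal, ∑ a, xd s a) - ∑ s ∈ Sdecoy, ∑ a, xd s a) ^ 2) :
    (Rstar - ∑ s, ∑ a, r s a * xd s a) / Rstar ≤
      (β / Rstar) *
        ((∑ s ∈ Sgoal, ∑ a, xstar s a) - ∑ s ∈ Sdecoy, ∑ a, xstar s a) ^ 2 :=
  equivocal_deception_revenue_loss_bound_general γ T α r Sgoal Sdecoy vreach β hβ xstar hxstar Rstar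
    hRstar hRstar_pos xd hxd_opt
end
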